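/- Assume a_i − a_j ∉ λ₀·ℤ for all i ≠ j in Fin n, so that distinct capped orbits have distinct actions. Let d be a Floer-type differential on C with a singular decomposition (α_1,…,α_p, η_1,…,η_r, γ_1,…,γ_r), r ≥ 1, indexed so that A(γ_1) − A(η_1) = β_min is the minimal bar. Let x̄_* be the unique capped orbit appearing in η_1 with A(x̄_*) = A(η_1), and let ȳ_* be the unique capped orbit appearing in γ_1 with A(ȳ_*) = A(γ_1). Then ⟨d x̄_*, ȳ_*⟩ = 1. -/

import Mathlib

/-!  Common setup: `Λ := LaurentSeries (ZMod 2)`, `C := Fin n → Λ`, the action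
functional `A`, orthogonality, capped orbits, the pairing `⟨d x̄, ȳ⟩`,
Floer-type differentials and singular decompositions. -/

noncomputable section

/-- The Novikov field `Λ = 𝔽₂((q))`, realized as formal Laurent series over `ZMod 2`. -/
abbrev Lam : Type := LaurentSeries (ZMod 2)

open Classical in
/-- The action `A : C → ℝ ∪ {+∞}`: `A 0 = ⊤` and for `ξ ≠ 0`,
`A ξ = min { a i + λ₀ • ord (ξ i) | ξ i ≠ 0 }`. -/
def actA (n : ℕ) (lam0 : ℝ) (a : Fin n → ℝ) (xi : Fin n → Lam) : WithTop ℝ :=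
  Finset.univ.inf fun i : Fin n =>
    if xi i = 0 then (⊤ : WithTop ℝ)
    else ((a i + lam0 * ((xi i).order : ℝ) : ℝ) : WithTop ℝ)

/-- A finite family `(ξ j)` of vectors of `C` is orthogonal if
`A (∑ λ_j • ξ_j) = min_j A (λ_j • ξ_j)` for all coefficients `λ_j ∈ Λ`. -/
def IsOrthogonalFamily (n : ℕ) (lam0 : ℝ) (a : Fin n → ℝ) {ι : Type} [Fintype ι]
    (xi : ι → (Fin n → Lam)) : Prop :=
  ∀ c : ι → Lam,
    actA n lam0 a (∑ j, c j • xi j) = Finset.univ.inf fun j => actA n lam0 a (c j • xi j)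

/-- The capped orbit `q^k eᵢ`. -/
def cappedOrbit (n : ℕ) (i : Fin n) (k : ℤ) : Fin n → Lam :=
  Pi.single i (HahnSeries.single k 1)

/-- `⟨d x̄, ȳ⟩ ∈ 𝔽₂` for `x̄ = q^k eᵢ` and `ȳ = q^l eⱼ`: the `(l - k)`-th Laurent
coefficient of the `j`-th component of `d eᵢ`. -/
def pairing (n : ℕ) (d : (Fin n → Lam) →ₗ[Lam] (Fin n → Lam)) (i j : Fin n) (k l : ℤ) :
    ZMod 2 :=
  ((d (Pi.single i 1)) j).coeff (l - k)

/-- The set of arrow lengths `A ȳ - A x̄` over pairs of capped orbits with `⟨d x̄, ȳ⟩ = 1`. -/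
def arrowLengths (n : ℕ) (lam0 : ℝ) (a : Fin n → ℝ)
    (d : (Fin n → Lam) →ₗ[Lam] (Fin n → Lam)) : Set ℝ :=
  {t : ℝ | ∃ (i j : Fin n) (k l : ℤ),
    pairing n d i j k l = 1 ∧ t = (a j + lam0 * l) - (a i + lam0 * k)}

/-- The set of values `A (d ξ) - A ξ` over `ξ ∈ C` with `d ξ ≠ 0`. -/
def actionGaps (n : ℕ) (lam0 : ℝ) (a : Fin n → ℝ)
    (d : (Fin n → Lam) →ₗ[Lam] (Fin n → Lam)) : Set ℝ :=
  {t : ℝ | ∃ xi : Fin n → Lam, d xi ≠ 0 ∧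
    actA n lam0 a (d xi) = actA n lam0 a xi + (t : WithTop ℝ)}

/-- A Floer-type differential on `C`: a `Λ`-linear map squaring to zero that strictly
increases the action. -/
def IsFloerDifferential (n : ℕ) (lam0 : ℝ) (a : Fin n → ℝ)
    (d : (Fin n → Lam) →ₗ[Lam] (Fin n → Lam)) : Prop :=
  d ∘ₗ d = 0 ∧
    ∀ xi : Fin n → Lam, xi ≠ 0 → d xi ≠ 0 → actA n lam0 a xi < actA n lam0 a (d xi)

/-- A singular decomposition of `(C, d)`: `p + 2r = n` and an orthogonal basis
`α₁,…,α_p, η₁,…,η_r, γ₁,…,γ_r` of `C` over `Λ` with `d αᵢ = 0` and `d ηⱼ = γⱼ`. -/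
def IsSingularDecomposition (n : ℕ) (lam0 : ℝ) (a : Fin n → ℝ)
    (d : (Fin n → Lam) →ₗ[Lam] (Fin n → Lam)) (p r : ℕ)
    (alpha : Fin p → (Fin n → Lam)) (eta gamma : Fin r → (Fin n → Lam)) : Prop :=
  p + 2 * r = n ∧
  IsOrthogonalFamily n lam0 a (Sum.elim alpha (Sum.elim eta gamma)) ∧
  LinearIndependent Lam (Sum.elim alpha (Sum.elim eta gamma)) ∧
  Submodule.span Lam (Set.range (Sum.elim alpha (Sum.elim eta gamma))) = ⊤ ∧
  (∀ i, d (alpha i) = 0) ∧ (∀ j, d (eta j) = gamma j)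

/-- The set of bars `A (γ j) - A (η j)` of a singular decomposition; its infimum is the
minimal bar `β_min` when `r ≥ 1`. -/
def barSet (n : ℕ) (lam0 : ℝ) (a : Fin n → ℝ) {r : ℕ}
    (eta gamma : Fin r → (Fin n → Lam)) : Set ℝ :=
  {t : ℝ | ∃ j : Fin r, actA n lam0 a (gamma j) = actA n lam0 a (eta j) + (t : WithTop ℝ)}

end

/-!
Write `x̄ = q^{k*} e_{i*}` and `ξ = η₁ - x̄`. Distinct capped orbits have distinct actions and the
coefficients lie in `𝔽₂`, so `x̄` cancels and every capped orbit appearing in `ξ` has action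
`> A(x̄) = A(η₁)`. Expanding in the orthogonal basis shows that `d` raises the action of every
vector by at least the minimal bar `β = A(ȳ) - A(x̄)`; hence `A(dξ) > A(ȳ)`, so `ȳ` does not
appear in `dξ` and therefore appears in `d x̄ = γ₁ - dξ`.
-/

lemma ZMod.two_eq_one_of_ne_zero {x : ZMod 2} (h : x ≠ 0) : x = 1 :=
  Fin.eq_one_of_ne_zero x h

lemma WithTop.add_coe_le_of_forall_eq_add_coe {x y : WithTop ℝ} {t₀ : ℝ} (hx : x ≠ ⊤)
    (h : ∀ t : ℝ, y = x + t → t₀ ≤ t) : x + t₀ ≤ y := by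
  lift x to ℝ using hx
  induction y with
  | top => exact le_top
  | coe y =>
    have := h (y - x) (by norm_cast; ring)
    exact_mod_cast (by linarith : x + t₀ ≤ y)

section Action

variable {n : ℕ} {lam0 : ℝ} {a : Fin n → ℝ}

@[simp]
lemma actA_zero : actA n lam0 a 0 = ⊤ := by
  simp [actA]

lemma actA_le_of_ne_zero {ξ : Fin n → Lam} {i : Fin n} (h : ξ i ≠ 0) :
    actA n lam0 a ξ ≤ ((a i + lam0 * (ξ i).order : ℝ) : WithTop ℝ) := by
  exact (Finset.inf_le (Finset.mem_univ i)).trans_eq (if_neg h)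

lemma actA_le_of_coeff_ne_zero (hlam0 : 0 ≤ lam0) {ξ : Fin n → Lam} {i : Fin n} {k : ℤ}
    (h : (ξ i).coeff k ≠ 0) : actA n lam0 a ξ ≤ ((a i + lam0 * k : ℝ) : WithTop ℝ) := by
  refine (actA_le_of_ne_zero (ne_of_apply_ne (HahnSeries.coeff · k) h)).trans ?_
  have hord : ((ξ i).order : ℝ) ≤ k := by exact_mod_cast HahnSeries.order_le_of_coeff_ne_zero h
  exact_mod_cast add_le_add_right (mul_le_mul_of_nonneg_left hord hlam0) _

lemma actA_ne_top {ξ : Fin n → Lam} (h : ξ ≠ 0) : actA n lam0 a ξ ≠ ⊤ := by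
  obtain ⟨i, hi⟩ := Function.ne_iff.1 h
  exact ne_top_of_le_ne_top WithTop.coe_ne_top (actA_le_of_ne_zero hi)

lemma coe_lt_actA {ξ : Fin n → Lam} {c : ℝ}
    (h : ∀ i k, (ξ i).coeff k ≠ 0 → c < a i + lam0 * k) :
    (c : WithTop ℝ) < actA n lam0 a ξ := by
  refine (Finset.lt_inf_iff (WithTop.coe_lt_top c)).2 fun i _ => ?_
  split_ifs with hi
  · exact WithTop.coe_lt_top c
  · exact_mod_cast h i _ (HahnSeries.coeff_order_eq_zero.not.2 hi)

lemma actA_smul {c : Lam} (hc : c ≠ 0) (ξ : Fin n → Lam) :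
    actA n lam0 a (c • ξ) = actA n lam0 a ξ + ((lam0 * c.order : ℝ) : WithTop ℝ) := by
  rw [actA, actA, Finset.apply_inf_eq_inf_comp_of_linearOrder (· + _)
    (fun _ _ h => add_le_add_left h _) (WithTop.top_add _)]
  refine Finset.inf_congr rfl fun i _ => ?_
  by_cases h : ξ i = 0
  · simp [h]
  · simp only [Pi.smul_apply, smul_eq_mul, Function.comp_apply, mul_eq_zero, hc, h, or_self,
      if_false, HahnSeries.order_mul hc h]
    norm_cast
    push_cast
    ring

lemma actA_smul_add_le_actA_smul {η γ : Fin n → Lam} {t : ℝ}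
    (h : actA n lam0 a η + t ≤ actA n lam0 a γ) (c : Lam) :
    actA n lam0 a (c • η) + t ≤ actA n lam0 a (c • γ) := by
  rcases eq_or_ne c 0 with rfl | hc
  · simp
  · rw [actA_smul hc, actA_smul hc, add_right_comm]
    exact add_le_add_left h _

lemma eq_and_eq_of_action_eq (hlam0 : lam0 ≠ 0)
    (hdist : ∀ i j : Fin n, i ≠ j → ∀ k : ℤ, a i - a j ≠ lam0 * k) {i j : Fin n} {k l : ℤ}
    (h : a i + lam0 * k = a j + lam0 * l) : i = j ∧ k = l := by
  obtain rfl : i = j := by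
    by_contra hij
    exact hdist i j hij (l - k) (by push_cast; linarith)
  refine ⟨rfl, ?_⟩
  exact_mod_cast mul_left_cancel₀ hlam0 (add_left_cancel h)

lemma coeff_cappedOrbit (i j : Fin n) (k l : ℤ) :
    (cappedOrbit n i k j).coeff l = if j = i ∧ l = k then 1 else 0 := by
  by_cases hj : j = i
  · subst hj
    simp [cappedOrbit, HahnSeries.coeff_single]
  · simp [cappedOrbit, hj]

lemma pairing_eq_coeff_cappedOrbit (d : (Fin n → Lam) →ₗ[Lam] (Fin n → Lam))
    (i j : Fin n) (k l : ℤ) : pairing n d i j k l = (d (cappedOrbit n i k) j).coeff l := by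
  have : cappedOrbit n i k = (HahnSeries.single k 1 : Lam) • Pi.single i 1 := by
    rw [cappedOrbit, ← Pi.single_smul, smul_eq_mul, mul_one]
  rw [pairing, this, map_smul, Pi.smul_apply, smul_eq_mul, ← one_mul ((d _ j).coeff (l - k)),
    ← HahnSeries.coeff_single_mul_add, sub_add_cancel]

lemma coe_lt_actA_sub_cappedOrbit (hlam0 : 0 < lam0)
    (hdist : ∀ i j : Fin n, i ≠ j → ∀ k : ℤ, a i - a j ≠ lam0 * k) {ξ : Fin n → Lam}
    {i : Fin n} {k : ℤ} (hmem : (ξ i).coeff k ≠ 0)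
    (hact : actA n lam0 a ξ = ((a i + lam0 * k : ℝ) : WithTop ℝ)) :
    ((a i + lam0 * k : ℝ) : WithTop ℝ) < actA n lam0 a (ξ - cappedOrbit n i k) := by
  refine coe_lt_actA fun j l hjl => ?_
  rw [Pi.sub_apply, HahnSeries.coeff_sub, coeff_cappedOrbit] at hjl
  split_ifs at hjl with horbit
  · obtain ⟨rfl, rfl⟩ := horbit
    rw [ZMod.two_eq_one_of_ne_zero hmem, sub_self] at hjl
    exact (hjl rfl).elim
  · rw [sub_zero] at hjl
    have hle : a i + lam0 * k ≤ a j + lam0 * l := by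
      exact_mod_cast hact ▸ actA_le_of_coeff_ne_zero hlam0.le hjl
    refine hle.lt_of_ne fun heq => horbit ?_
    obtain ⟨rfl, rfl⟩ := eq_and_eq_of_action_eq hlam0.ne' hdist heq
    exact ⟨rfl, rfl⟩

end Action

namespace IsSingularDecomposition

variable {n : ℕ} {lam0 : ℝ} {a : Fin n → ℝ} {d : (Fin n → Lam) →ₗ[Lam] (Fin n → Lam)}
  {p r : ℕ} {alpha : Fin p → (Fin n → Lam)} {eta gamma : Fin r → (Fin n → Lam)}

lemma isOrthogonalFamily (hdec : IsSingularDecomposition n lam0 a d p r alpha eta gamma) :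
    IsOrthogonalFamily n lam0 a (Sum.elim alpha (Sum.elim eta gamma)) :=
  hdec.2.1

lemma span_eq_top (hdec : IsSingularDecomposition n lam0 a d p r alpha eta gamma) :
    Submodule.span Lam (Set.range (Sum.elim alpha (Sum.elim eta gamma))) = ⊤ :=
  hdec.2.2.2.1

lemma map_alpha (hdec : IsSingularDecomposition n lam0 a d p r alpha eta gamma) (i : Fin p) :
    d (alpha i) = 0 :=
  hdec.2.2.2.2.1 i

lemma map_eta (hdec : IsSingularDecomposition n lam0 a d p r alpha eta gamma) (j : Fin r) :
    d (eta j) = gamma j :=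
  hdec.2.2.2.2.2 j

lemma eta_ne_zero (hdec : IsSingularDecomposition n lam0 a d p r alpha eta gamma) (j : Fin r) :
    eta j ≠ 0 :=
  hdec.2.2.1.ne_zero (Sum.inr (Sum.inl j) : Fin p ⊕ (Fin r ⊕ Fin r))

lemma map_sum_smul (hd2 : d ∘ₗ d = 0)
    (hdec : IsSingularDecomposition n lam0 a d p r alpha eta gamma)
    (c : Fin p ⊕ (Fin r ⊕ Fin r) → Lam) :
    d (∑ s, c s • Sum.elim alpha (Sum.elim eta gamma) s) =
      ∑ s, Sum.elim (0 : Fin p → Lam) (Sum.elim (0 : Fin r → Lam) fun j => c (.inr (.inl j))) s •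
        Sum.elim alpha (Sum.elim eta gamma) s := by
  have hdγ (j : Fin r) : d (gamma j) = 0 := by
    rw [← hdec.map_eta j, ← LinearMap.comp_apply, hd2, LinearMap.zero_apply]
  simp [Fintype.sum_sum_type, hdec.map_alpha, hdec.map_eta, hdγ]

lemma actA_add_le_actA_apply (hd2 : d ∘ₗ d = 0)
    (hdec : IsSingularDecomposition n lam0 a d p r alpha eta gamma) {t : ℝ}
    (hbar : ∀ j, actA n lam0 a (eta j) + t ≤ actA n lam0 a (gamma j)) (ζ : Fin n → Lam) :
    actA n lam0 a ζ + t ≤ actA n lam0 a (d ζ) := by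
  obtain ⟨c, rfl⟩ := (Submodule.mem_span_range_iff_exists_fun Lam).1
    (hdec.span_eq_top ▸ Submodule.mem_top : ζ ∈ Submodule.span Lam _)
  rw [hdec.map_sum_smul hd2, hdec.isOrthogonalFamily, hdec.isOrthogonalFamily]
  refine Finset.le_inf fun s _ => ?_
  rcases s with i | j | j
  · simp
  · simp
  · exact (add_le_add_left (Finset.inf_le (Finset.mem_univ (Sum.inr (Sum.inl j)))) _).trans
      (actA_smul_add_le_actA_smul (hbar j) _)

end IsSingularDecomposition

/-- Assume all capped orbits have pairwise distinct actions. Let `d` be a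
Floer-type differential with a singular decomposition indexed so that
`A (γ 0) - A (η 0) = β_min` is the minimal bar. If `x̄_* = q^k* e_{i*}` is the capped
orbit appearing in `η 0` of action `A (η 0)` and `ȳ_* = q^l* e_{j*}` is the capped orbit
appearing in `γ 0` of action `A (γ 0)`, then `⟨d x̄_*, ȳ_*⟩ = 1`. -/
theorem pairing_of_minimal_bar (n : ℕ) (lam0 : ℝ) (hlam0 : 0 < lam0) (a : Fin n → ℝ)
    (hdist : ∀ i j : Fin n, i ≠ j → ∀ k : ℤ, a i - a j ≠ lam0 * k)
    (d : (Fin n → Lam) →ₗ[Lam] (Fin n → Lam))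
    (hFloer : IsFloerDifferential n lam0 a d)
    (p r : ℕ) (hr : 1 ≤ r)
    (alpha : Fin p → (Fin n → Lam)) (eta gamma : Fin r → (Fin n → Lam))
    (hdec : IsSingularDecomposition n lam0 a d p r alpha eta gamma)
    (hmin : ∀ j : Fin r, ∀ t0 t : ℝ,
      actA n lam0 a (gamma ⟨0, hr⟩) = actA n lam0 a (eta ⟨0, hr⟩) + (t0 : WithTop ℝ) →
      actA n lam0 a (gamma j) = actA n lam0 a (eta j) + (t : WithTop ℝ) → t0 ≤ t)
    (istar jstar : Fin n) (kstar lstar : ℤ)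
    (hxmem : ((eta ⟨0, hr⟩) istar).coeff kstar ≠ 0)
    (hxact : actA n lam0 a (eta ⟨0, hr⟩) = ((a istar + lam0 * kstar : ℝ) : WithTop ℝ))
    (hymem : ((gamma ⟨0, hr⟩) jstar).coeff lstar ≠ 0)
    (hyact : actA n lam0 a (gamma ⟨0, hr⟩) = ((a jstar + lam0 * lstar : ℝ) : WithTop ℝ)) :
    pairing n d istar jstar kstar lstar = 1 := by
  set β : ℝ := (a jstar + lam0 * lstar) - (a istar + lam0 * kstar)
  have hβ : actA n lam0 a (gamma ⟨0, hr⟩) = actA n lam0 a (eta ⟨0, hr⟩) + (β : WithTop ℝ) := by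
    rw [hxact, hyact]; norm_cast; ring
  have hbar (j : Fin r) : actA n lam0 a (eta j) + β ≤ actA n lam0 a (gamma j) :=
    WithTop.add_coe_le_of_forall_eq_add_coe (actA_ne_top (hdec.eta_ne_zero j)) (hmin j β · hβ)
  set ξ := eta ⟨0, hr⟩ - cappedOrbit n istar kstar
  have hdξ : ((a jstar + lam0 * lstar : ℝ) : WithTop ℝ) < actA n lam0 a (d ξ) := calc
    _ = ((a istar + lam0 * kstar : ℝ) : WithTop ℝ) + β := by norm_cast; ring
    _ < actA n lam0 a ξ + β := WithTop.add_lt_add_right WithTop.coe_ne_top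
      (coe_lt_actA_sub_cappedOrbit hlam0 hdist hxmem hxact)
    _ ≤ actA n lam0 a (d ξ) := hdec.actA_add_le_actA_apply hFloer.1 hbar ξ
  have hy_notin : (d ξ jstar).coeff lstar = 0 := by
    by_contra h
    exact (actA_le_of_coeff_ne_zero hlam0.le h).not_gt hdξ
  have hdx : d (cappedOrbit n istar kstar) = gamma ⟨0, hr⟩ - d ξ := by
    rw [map_sub, hdec.map_eta, sub_sub_cancel]
  rw [pairing_eq_coeff_cappedOrbit, hdx, Pi.sub_apply, HahnSeries.coeff_sub, hy_notin, sub_zero]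
  exact ZMod.two_eq_one_of_ne_zero hymem
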